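/- arXiv:1904.04088 — 2 statements merged into one kernel-verified Lean document; each statement's English description precedes it below -/
import Mathlib

section
/- Fix real numbers σ > 0 and c > 0. The smoothed hinge loss g^σ_c : ℝ → ℝ is differentiable at every s ∈ ℝ, and its derivative is g^σ_c'(s) = −ν*(s), where ν*(s) = min(max((1 − s)/(σc), 0), 1). -/
/-- The smoothed hinge loss g^σ_c in piecewise closed form. -/
noncomputable def smoothedHinge (σ c s : ℝ) : ℝ :=
  if 1 < s then 0
  else if s < 1 - σ * c then (1 - s) - σ * c / 2
  else (1 - s) ^ 2 / (2 * σ * c)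

/-- The clipped value ν*(s) = min(max((1 − s)/(σc), 0), 1). -/
noncomputable def nuStar (σ c s : ℝ) : ℝ := min (max ((1 - s) / (σ * c)) 0) 1

/-!
Writing `t⁺ = max t 0`, the three pieces of the smoothed hinge loss combine into the single formula
`g(s) = (((1 - s)⁺)² - ((1 - s - σc)⁺)²) / (2σc)`, and likewise `ν*(s) = ((1 - s)⁺ - (1 - s - σc)⁺) / (σc)`.
Since `t ↦ (t⁺)²` is differentiable with derivative `2 t⁺` (at `0` both one-sided derivatives vanish),
the chain rule gives `g' = -ν*`.
-/

open Set

theorem hasDerivAt_max_zero_sq (x : ℝ) :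
    HasDerivAt (fun y : ℝ => max y 0 ^ 2) (2 * max x 0) x := by
  have hsq : ∀ y : ℝ, HasDerivAt (fun y : ℝ => y ^ 2) (2 * y) y := fun y => by
    simpa using hasDerivAt_pow 2 y
  rcases lt_trichotomy x 0 with hx | rfl | hx
  · rw [max_eq_right hx.le, mul_zero]
    refine (hasDerivAt_const x (0 : ℝ)).congr_of_eventuallyEq ?_
    filter_upwards [eventually_lt_nhds hx] with y hy
    simp [max_eq_right hy.le]
  · rw [max_self, mul_zero, ← hasDerivWithinAt_univ, ← Iic_union_Ici]
    have hneg : HasDerivWithinAt (fun y : ℝ => max y 0 ^ 2) 0 (Iic 0) 0 :=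
      (hasDerivWithinAt_const (0 : ℝ) _ (0 : ℝ)).congr
        (fun y hy => by simp [max_eq_right (show y ≤ 0 from hy)]) (by simp)
    have hpos : HasDerivWithinAt (fun y : ℝ => max y 0 ^ 2) 0 (Ici 0) 0 := by
      simpa using ((hsq 0).hasDerivWithinAt (s := Ici 0)).congr
        (fun y hy => by rw [max_eq_left (show 0 ≤ y from hy)]) (by simp)
    exact hneg.union hpos
  · rw [max_eq_left hx.le]
    refine (hsq x).congr_of_eventuallyEq ?_
    filter_upwards [eventually_gt_nhds hx] with y hy
    rw [max_eq_left hy.le]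

theorem HasDerivAt.max_zero_sq {f : ℝ → ℝ} {f' x : ℝ} (hf : HasDerivAt f f' x) :
    HasDerivAt (fun y => max (f y) 0 ^ 2) (2 * max (f x) 0 * f') x :=
  (hasDerivAt_max_zero_sq (f x)).comp x hf

theorem smoothedHinge_eq_max_zero_sq {σ c : ℝ} (hσ : 0 < σ) (hc : 0 < c) :
    smoothedHinge σ c = fun s =>
      (max (1 - s) 0 ^ 2 - max (1 - s - σ * c) 0 ^ 2) / (2 * σ * c) := by
  funext s
  have hσc : 0 < σ * c := mul_pos hσ hc
  unfold smoothedHinge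
  split_ifs with h₁ h₂
  · rw [max_eq_right (by linarith), max_eq_right (by linarith)]
    simp
  · rw [max_eq_left (by linarith), max_eq_left (by linarith)]
    field_simp
    ring
  · rw [max_eq_left (by linarith), max_eq_right (by linarith)]
    field_simp
    ring

theorem nuStar_eq_max_zero_sub {σ c : ℝ} (hσc : 0 < σ * c) (s : ℝ) :
    nuStar σ c s = (max (1 - s) 0 - max (1 - s - σ * c) 0) / (σ * c) := by
  unfold nuStar
  rcases le_or_gt (1 - s) 0 with h₁ | h₁
  · rw [max_eq_right (div_nonpos_of_nonpos_of_nonneg h₁ hσc.le), max_eq_right h₁,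
      max_eq_right (show 1 - s - σ * c ≤ 0 by linarith)]
    simp
  rcases le_or_gt (1 - s - σ * c) 0 with h₂ | h₂
  · have hle : (1 - s) / (σ * c) ≤ 1 := by rw [div_le_one hσc]; linarith
    rw [max_eq_left h₁.le, max_eq_right h₂, max_eq_left (div_pos h₁ hσc).le, min_eq_left hle,
      sub_zero]
  · have hge : 1 ≤ (1 - s) / (σ * c) := by rw [le_div_iff₀ hσc]; linarith
    rw [max_eq_left h₁.le, max_eq_left h₂.le, max_eq_left (by linarith), min_eq_right hge,
      sub_sub_cancel, div_self hσc.ne']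

/-- for σ > 0 and c > 0, the smoothed hinge loss is differentiable at every
s ∈ ℝ with derivative −ν*(s). -/
theorem stmt_3 (σ c : ℝ) (hσ : 0 < σ) (hc : 0 < c) (s : ℝ) :
    HasDerivAt (smoothedHinge σ c) (-(nuStar σ c s)) s := by
  have h₁ := ((hasDerivAt_id' s).const_sub 1).max_zero_sq
  have h₂ := (((hasDerivAt_id' s).const_sub 1).sub_const (σ * c)).max_zero_sq
  rw [smoothedHinge_eq_max_zero_sq hσ hc, nuStar_eq_max_zero_sub (mul_pos hσ hc)]
  refine ((h₁.sub h₂).div_const (2 * σ * c)).congr_deriv ?_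
  field_simp
  ring
end

section
/- (Theorem 3, key monotonicity step.) Let Φ be any real-valued function on d × P real matrices, let γ_B > 0, and let U and U' be d × P real matrices such that every row u^i of U is nonzero (1 ≤ i ≤ d). If Φ(U') + γ_B Σ_{i=1}^d ‖u'^i‖² / (2‖u^i‖) ≤ Φ(U) + γ_B Σ_{i=1}^d ‖u^i‖² / (2‖u^i‖), where u'^i and u^i denote the i-th rows of U' and U and ‖·‖ is the Euclidean norm, then Φ(U') + γ_B Σ_{i=1}^d ‖u'^i‖ ≤ Φ(U) + γ_B Σ_{i=1}^d ‖u^i‖. -/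
/-- Theorem 3, key monotonicity step: if every row u^i of U is nonzero
and Φ(U') + γ_B Σᵢ ‖u'^i‖²/(2‖u^i‖) ≤ Φ(U) + γ_B Σᵢ ‖u^i‖²/(2‖u^i‖), then
Φ(U') + γ_B Σᵢ ‖u'^i‖ ≤ Φ(U) + γ_B Σᵢ ‖u^i‖. Matrices are represented by their rows. -/
theorem stmt_14 (d P : ℕ) (γB : ℝ) (hγB : 0 < γB)
    (Φ : (Fin d → EuclideanSpace ℝ (Fin P)) → ℝ)
    (U U' : Fin d → EuclideanSpace ℝ (Fin P)) (hU : ∀ i, U i ≠ 0)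
    (h : Φ U' + γB * ∑ i, ‖U' i‖ ^ 2 / (2 * ‖U i‖) ≤
         Φ U + γB * ∑ i, ‖U i‖ ^ 2 / (2 * ‖U i‖)) :
    Φ U' + γB * ∑ i, ‖U' i‖ ≤ Φ U + γB * ∑ i, ‖U i‖ := by
  have key : ∀ i, ‖U' i‖ - ‖U' i‖ ^ 2 / (2 * ‖U i‖) ≤ ‖U i‖ - ‖U i‖ ^ 2 / (2 * ‖U i‖) := by
    intro i
    have hpos : 0 < ‖U i‖ := norm_pos_iff.mpr (hU i)
    have hsq : 0 ≤ (‖U' i‖ - ‖U i‖) ^ 2 := sq_nonneg _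
    have h2 : (0:ℝ) < 2 * ‖U i‖ := by positivity
    have e1 : ‖U i‖ ^ 2 / (2 * ‖U i‖) = ‖U i‖ / 2 := by
      field_simp
    have expand : (‖U' i‖ - ‖U i‖) ^ 2 / (2 * ‖U i‖)
        = ‖U' i‖ ^ 2 / (2 * ‖U i‖) + ‖U i‖ / 2 - ‖U' i‖ := by
      field_simp; ring
    have := div_nonneg hsq h2.le
    rw [expand] at this
    linarith
  have hsum : ∑ i, ‖U' i‖ - ∑ i, ‖U' i‖ ^ 2 / (2 * ‖U i‖) ≤
      ∑ i, ‖U i‖ - ∑ i, ‖U i‖ ^ 2 / (2 * ‖U i‖) := by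
    rw [← Finset.sum_sub_distrib, ← Finset.sum_sub_distrib]
    exact Finset.sum_le_sum fun i _ => key i
  nlinarith [mul_le_mul_of_nonneg_left hsum hγB.le]
end
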